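/- arXiv:1405.5800 — 4 statements merged into one kernel-verified Lean document; each statement's English description precedes it below -/
import Mathlib

section
/- Let q be a prime power and let c₁, c₂, c₃ ∈ 𝔽_q[t] \ {0} satisfy c₁ + c₂ + c₃ = 0. There exists a constant C > 0 depending only on q and c₁, c₂, c₃ such that for every integer n ≥ 2, if A ⊆ {f ∈ 𝔽_q[t] : deg f < n} contains no non-trivial solution to c₁x₁ + c₂x₂ + c₃x₃ = 0 with x₁, x₂, x₃ ∈ A, then |A| ≤ C · q^n · (log n)^2 / n. -/
/-!
Slice rank (Croot–Lev–Pach, Ellenberg–Gijswijt, Tao) gives a bound of the form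
`C qⁿ / n`. Take the first `m = n + d` coefficients, where `d` bounds the degrees
of the `cᵢ`. This sends `x ∈ A` to the three vectors `c₁x, c₂x, c₃x ∈ 𝔽_q^m`,
and `c₁x + c₂y + c₃z = 0` exactly when `x = y = z`. So on `A³` the function
`∏ⱼ (1 - (c₁x + c₂y + c₃z)ⱼ^(q-1))` is the diagonal indicator tensor. Expand it into
monomials. Each monomial has degree at most `(q-1)m/3` in the coordinates of one
of `x, y, z`. Hence the tensor has slice rank at most three times the number of
such low-weight exponent vectors. A diagonal tensor with nonzero diagonal has slice
rank equal to its size, so this number bounds `|A|`. Chebyshev's inequality for the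
sum of `m` independent uniform digits in `{0, …, q-1}` bounds the number of
low-weight exponent vectors by `9 qᵐ / m`.
-/

open Finset Module Polynomial
open Fintype (piFinset)

theorem Submodule.exists_mem_finrank_le_card_support {F ι : Type*} [Field F] [Fintype ι]
    [DecidableEq F] (V : Submodule F (ι → F)) :
    ∃ v ∈ V, finrank F V ≤ Fintype.card {i // v i ≠ 0} := by
  let e : ι → Dual F V := fun i => (LinearMap.proj i).comp V.subtype
  have hspan : span F (Set.range e) = ⊤ := by
    refine span_eq_top_of_ne_zero fun z hz => ?_
    obtain ⟨i, hi⟩ := Function.ne_iff.1 (Subtype.coe_ne_coe.2 hz)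
    exact ⟨e i, ⟨i, rfl⟩, hi⟩
  obtain ⟨κ, a, ha, hspan', hli⟩ := exists_linearIndependent' F e
  have : Fintype κ := @Fintype.ofFinite κ hli.finite
  obtain ⟨f, hf⟩ := exists_dual_forall_apply_eq_one hli.linearIndepOn_univ
  let v := (evalEquiv F V).symm f
  have hv (k : κ) : (v : ι → F) (a k) = 1 := by
    rw [← hf k (Set.mem_univ k), ← apply_evalEquiv_symm_apply]; rfl
  refine ⟨v, v.2, ?_⟩
  calc finrank F V = Fintype.card κ := by
        rw [← Subspace.dual_finrank_eq, ← finrank_top, ← hspan, ← hspan',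
          finrank_span_eq_card hli]
    _ ≤ Fintype.card {i // (v : ι → F) i ≠ 0} :=
        Fintype.card_le_of_injective (fun k => ⟨a k, by simp [hv]⟩)
          fun k l hkl => ha (congrArg Subtype.val hkl)

theorem card_le_of_diagonal_eq_sum_slices {F ι κ : Type*} [Field F] [Fintype ι] [DecidableEq ι]
    (Γ : Finset κ) (f₁ f₂ f₃ : κ → ι → F) (g₁ g₂ g₃ : κ → ι → ι → F)
    (h : ∀ x y z, (if x = y ∧ y = z then 1 else 0 : F) =
      ∑ γ ∈ Γ, f₁ γ x * g₁ γ y z + ∑ γ ∈ Γ, f₂ γ y * g₂ γ x z + ∑ γ ∈ Γ, f₃ γ z * g₃ γ x y) :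
    Fintype.card ι ≤ 3 * #Γ := by
  classical
  -- Contract the third slot against a `w` of large support annihilating every `f₃ γ`:
  -- what is left is `diagonal w`, a sum of `2 #Γ` rank-one matrices.
  let M : Matrix Γ ι F := Matrix.of fun γ z => f₃ γ z
  obtain ⟨w, hw, hsupp⟩ := (LinearMap.ker M.mulVecLin).exists_mem_finrank_le_card_support
  have hw' : ∀ γ ∈ Γ, ∑ z, f₃ γ z * w z = 0 := fun γ hγ => congrFun hw ⟨γ, hγ⟩
  have hker : Fintype.card ι ≤ #Γ + finrank F (LinearMap.ker M.mulVecLin) := by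
    have hrank := LinearMap.finrank_range_add_finrank_ker M.mulVecLin
    have hheight := M.rank_le_card_height
    rw [finrank_fintype_fun_eq_card] at hrank
    rw [Matrix.rank, Fintype.card_coe] at hheight
    omega
  let A₁ : Matrix ι Γ F := Matrix.of fun x γ => f₁ γ x
  let B₁ : Matrix Γ ι F := Matrix.of fun γ y => ∑ z, w z * g₁ γ y z
  let A₂ : Matrix ι Γ F := Matrix.of fun x γ => ∑ z, w z * g₂ γ x z
  let B₂ : Matrix Γ ι F := Matrix.of fun γ y => f₂ γ y
  have hdiag : Matrix.diagonal w = A₁.fromCols A₂ * B₁.fromRows B₂ := by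
    ext x y
    have hsum : Matrix.diagonal w x y = ∑ z, w z * (if x = y ∧ y = z then 1 else 0 : F) := by
      by_cases hxy : x = y <;> simp [hxy]
    rw [Matrix.fromCols_mul_fromRows, hsum]
    have h₃ : ∑ z, w z * ∑ γ ∈ Γ, f₃ γ z * g₃ γ x y = 0 := by
      simp_rw [mul_sum, ← mul_assoc, mul_comm (w _)]
      rw [sum_comm]
      exact sum_eq_zero fun γ hγ => by rw [← sum_mul, hw' γ hγ, zero_mul]
    simp only [h, mul_add, sum_add_distrib]
    rw [h₃, add_zero, Matrix.add_apply]
    congr 1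
    · simp only [Matrix.mul_apply, A₁, B₁, Matrix.of_apply, mul_sum]
      rw [sum_comm, ← sum_coe_sort Γ]
      exact sum_congr rfl fun γ _ => sum_congr rfl fun z _ => by ring
    · simp only [Matrix.mul_apply, A₂, B₂, Matrix.of_apply, mul_sum, sum_mul]
      rw [sum_comm, ← sum_coe_sort Γ]
      exact sum_congr rfl fun γ _ => sum_congr rfl fun z _ => by ring
  calc Fintype.card ι ≤ #Γ + Fintype.card {i // w i ≠ 0} := by omega
    _ = #Γ + (Matrix.diagonal w).rank := by rw [Matrix.rank_diagonal]
    _ ≤ #Γ + Fintype.card (Γ ⊕ Γ) := by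
        grw [hdiag, Matrix.rank_mul_le_left, Matrix.rank_le_card_width]
    _ = 3 * #Γ := by rw [Fintype.card_sum, Fintype.card_coe]; ring

theorem Finset.sum_comp_mul_eq_sum_mul_sum_fiberwise {R ι κ : Type*} [CommSemiring R]
    [DecidableEq κ] {s : Finset ι} {t : Finset κ} {p : ι → κ} (h : ∀ i ∈ s, p i ∈ t)
    (u : κ → R) (f : ι → R) :
    ∑ i ∈ s, u (p i) * f i = ∑ k ∈ t, u k * ∑ i ∈ s with p i = k, f i := by
  rw [← sum_fiberwise_of_maps_to h]
  refine sum_congr rfl fun k _ => ?_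
  rw [mul_sum]
  exact sum_congr rfl fun i hi => by rw [(mem_filter.1 hi).2]

theorem exists_sum_slices_eq_sum_of_mem {R X Y Z ι κ : Type*} [CommSemiring R]
    (G : Finset ι) (Γ : Finset κ) (K : ι → R) (p₁ p₂ p₃ : ι → κ)
    (U : κ → X → R) (V : κ → Y → R) (W : κ → Z → R)
    (hG : ∀ g ∈ G, p₁ g ∈ Γ ∨ p₂ g ∈ Γ ∨ p₃ g ∈ Γ) :
    ∃ (H₁ : κ → Y → Z → R) (H₂ : κ → X → Z → R) (H₃ : κ → X → Y → R), ∀ x y z,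
      ∑ g ∈ G, K g * U (p₁ g) x * V (p₂ g) y * W (p₃ g) z =
        ∑ α ∈ Γ, U α x * H₁ α y z + ∑ α ∈ Γ, V α y * H₂ α x z + ∑ α ∈ Γ, W α z * H₃ α x y := by
  classical
  let G₁ := G.filter (p₁ · ∈ Γ)
  let G₂ := (G.filter (p₁ · ∉ Γ)).filter (p₂ · ∈ Γ)
  let G₃ := (G.filter (p₁ · ∉ Γ)).filter (p₂ · ∉ Γ)
  have h₁ : ∀ g ∈ G₁, p₁ g ∈ Γ := fun g hg => (mem_filter.1 hg).2
  have h₂ : ∀ g ∈ G₂, p₂ g ∈ Γ := fun g hg => (mem_filter.1 hg).2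
  have h₃ : ∀ g ∈ G₃, p₃ g ∈ Γ := fun g hg => by
    simp only [G₃, mem_filter] at hg
    exact ((hG g hg.1.1).resolve_left hg.1.2).resolve_left hg.2
  refine ⟨fun α y z => ∑ g ∈ G₁ with p₁ g = α, K g * V (p₂ g) y * W (p₃ g) z,
    fun α x z => ∑ g ∈ G₂ with p₂ g = α, K g * U (p₁ g) x * W (p₃ g) z,
    fun α x y => ∑ g ∈ G₃ with p₃ g = α, K g * U (p₁ g) x * V (p₂ g) y, fun x y z => ?_⟩
  rw [← sum_filter_add_sum_filter_not G (p₁ · ∈ Γ),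
    ← sum_filter_add_sum_filter_not (G.filter (p₁ · ∉ Γ)) (p₂ · ∈ Γ), ← add_assoc,
    ← sum_comp_mul_eq_sum_mul_sum_fiberwise h₁, ← sum_comp_mul_eq_sum_mul_sum_fiberwise h₂,
    ← sum_comp_mul_eq_sum_mul_sum_fiberwise h₃]
  congr 1; congr 1
  all_goals exact sum_congr rfl fun g _ => by ring

open MvPolynomial in
theorem exists_sum_monomials_eq_one_sub_pow (R : Type*) [CommRing R] (N : ℕ) :
    ∃ (E : Finset (Fin 3 →₀ ℕ)) (κ : (Fin 3 →₀ ℕ) → R), (∀ e ∈ E, e 0 + e 1 + e 2 ≤ N) ∧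
      ∀ a b c : R, 1 - (a + b + c) ^ N = ∑ e ∈ E, κ e * (a ^ e 0 * b ^ e 1 * c ^ e 2) := by
  let p : MvPolynomial (Fin 3) R := 1 - (X 0 + X 1 + X 2) ^ N
  refine ⟨p.support, p.coeff, fun e he => ?_, fun a b c => ?_⟩
  · have hdeg : p.totalDegree ≤ N := by
      have hX (i : Fin 3) : (X i : MvPolynomial (Fin 3) R).totalDegree ≤ 1 :=
        (totalDegree_monomial_le _ _).trans (by simp)
      have hlin : (X 0 + X 1 + X 2 : MvPolynomial (Fin 3) R).totalDegree ≤ 1 :=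
        (totalDegree_add _ _).trans (max_le ((totalDegree_add _ _).trans
          (max_le (hX 0) (hX 1))) (hX 2))
      refine (totalDegree_sub _ _).trans (max_le (by simp) ((totalDegree_pow _ _).trans ?_))
      simpa using Nat.mul_le_mul_left N hlin
    have he' := le_totalDegree he
    rw [Finsupp.sum_fintype _ _ (fun _ => rfl), Fin.sum_univ_three] at he'
    omega
  · simpa [p, Fin.prod_univ_three] using eval_eq' ![a, b, c] p

def lowWeight (N m : ℕ) : Finset (Fin m → ℕ) :=
  {α ∈ piFinset fun _ => range (N + 1) | 3 * ∑ j, α j ≤ N * m}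

theorem mem_lowWeight_or_of_add_le {N m : ℕ} {a b c : Fin m → ℕ}
    (h : ∀ j, a j + b j + c j ≤ N) :
    a ∈ lowWeight N m ∨ b ∈ lowWeight N m ∨ c ∈ lowWeight N m := by
  have hsum : ∑ j, a j + ∑ j, b j + ∑ j, c j ≤ N * m := by
    simpa [← sum_add_distrib, mul_comm] using sum_le_sum fun j (_ : j ∈ univ) => h j
  have hrange : ∀ d : Fin m → ℕ, (∀ j, d j ≤ N) → d ∈ piFinset fun _ => range (N + 1) :=
    fun d hd => Fintype.mem_piFinset.2 fun j => mem_range.2 (Nat.lt_succ_of_le (hd j))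
  simp only [lowWeight, mem_filter, hrange a (fun j => by linarith [h j]),
    hrange b (fun j => by linarith [h j]), hrange c (fun j => by linarith [h j]), true_and]
  omega

theorem card_le_three_mul_card_lowWeight_of_add_eq_zero_iff {F ι : Type*} [Field F] [Fintype F]
    [Fintype ι] {m : ℕ} (u v w : ι → Fin m → F)
    (h : ∀ x y z, u x + v y + w z = 0 ↔ x = y ∧ y = z) :
    Fintype.card ι ≤ 3 * #(lowWeight (Fintype.card F - 1) m) := by
  classical
  set N := Fintype.card F - 1
  obtain ⟨E, κ, hE, hκ⟩ := exists_sum_monomials_eq_one_sub_pow F N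
  have hN : N ≠ 0 := by have := Fintype.one_lt_card (α := F); omega
  have hT : ∀ x y z, (if x = y ∧ y = z then 1 else 0 : F) =
      ∏ j, (1 - (u x j + v y j + w z j) ^ N) := by
    intro x y z
    split_ifs with hxyz
    · have h0 := (h x y z).2 hxyz
      refine (prod_eq_one fun j _ => ?_).symm
      rw [show u x j + v y j + w z j = 0 from congrFun h0 j, zero_pow hN, sub_zero]
    · obtain ⟨j, hj⟩ := Function.ne_iff.1 (mt (h x y z).1 hxyz)
      have hpow : (u x j + v y j + w z j) ^ N = 1 := FiniteField.pow_card_sub_one_eq_one _ hj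
      exact (prod_eq_zero (mem_univ j) (by rw [hpow, sub_self])).symm
  let U : (Fin m → ℕ) → ι → F := fun α x => ∏ j, u x j ^ α j
  let V : (Fin m → ℕ) → ι → F := fun α y => ∏ j, v y j ^ α j
  let W : (Fin m → ℕ) → ι → F := fun α z => ∏ j, w z j ^ α j
  have hexp : ∀ x y z, ∏ j, (1 - (u x j + v y j + w z j) ^ N) =
      ∑ g ∈ piFinset fun _ => E, (∏ j, κ (g j)) * U (fun j => g j 0) x *
        V (fun j => g j 1) y * W (fun j => g j 2) z := by
    intro x y z
    simp_rw [hκ, prod_univ_sum, U, V, W, ← prod_mul_distrib]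
    exact sum_congr rfl fun g _ => prod_congr rfl fun j _ => by ring
  obtain ⟨H₁, H₂, H₃, hH⟩ := exists_sum_slices_eq_sum_of_mem _ (lowWeight N m) _ _ _ _ U V W
    fun g hg => mem_lowWeight_or_of_add_le fun j => hE _ (Fintype.mem_piFinset.1 hg j)
  exact card_le_of_diagonal_eq_sum_slices _ U V W H₁ H₂ H₃ fun x y z => by
    rw [hT, hexp, hH]

theorem sum_piFinset_sq_sum_eq {R κ : Type*} [CommRing R] (s : Finset κ) {d : κ → R}
    (hd : ∑ a ∈ s, d a = 0) (m : ℕ) :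
    ∑ α ∈ piFinset (fun _ : Fin m => s), (∑ j, d (α j)) ^ 2 =
      m * #s ^ (m - 1) * ∑ a ∈ s, d a ^ 2 := by
  have hoff : ∀ j k : Fin m, j ≠ k → ∑ α ∈ piFinset (fun _ => s), d (α j) * d (α k) = 0 := by
    intro j k hjk
    have hprod : ∀ α : Fin m → κ,
        d (α j) * d (α k) = ∏ i, if i = j ∨ i = k then d (α i) else 1 := by
      intro α
      rw [prod_ite, prod_const_one, mul_one, filter_or, filter_eq', filter_eq',
        if_pos (mem_univ _), if_pos (mem_univ _), prod_union (by simpa using hjk),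
        prod_singleton, prod_singleton]
    simp_rw [hprod]
    rw [Finset.sum_prod_piFinset s (fun i a => if i = j ∨ i = k then d a else 1)]
    exact prod_eq_zero (mem_univ j) (by simpa using hd)
  simp_rw [sq, sum_mul_sum]
  rw [sum_comm]
  simp_rw [sum_comm (s := piFinset _) (t := univ)]
  rw [sum_congr rfl fun j _ => sum_eq_single j (fun k _ hkj => hoff j k hkj.symm)
    (by simp)]
  simp_rw [Fintype.sum_piFinset_apply (fun a => d a * d a) s, sum_const, card_univ,
    Fintype.card_fin, nsmul_eq_mul]
  push_cast
  ring

theorem card_lowWeight_mul_le {N : ℕ} (hN : 0 < N) (m : ℕ) :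
    #(lowWeight N m) * m ≤ 9 * (N + 1) ^ m := by
  rcases Nat.eq_zero_or_pos m with rfl | hm
  · simp
  -- Chebyshev for the centred digits `d`: low weight forces `∑ j, d (α j) ≤ -Nm/3`.
  let d : ℕ → ℤ := fun i => 2 * i - N
  have hd : ∑ i ∈ range (N + 1), d i = 0 := by
    have := Finset.sum_range_id_mul_two (N + 1)
    simp only [d, sum_sub_distrib, ← mul_sum, sum_const, card_range, nsmul_eq_mul]
    rw [← Nat.cast_sum, mul_comm, ← Nat.cast_two, ← Nat.cast_mul, this]
    push_cast
    ring
  have hdev : ∀ α ∈ lowWeight N m, ((N * m : ℕ) : ℤ) ^ 2 ≤ 9 * (∑ j, d (α j)) ^ 2 := by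
    intro α hα
    have hw : 3 * ∑ j, (α j : ℤ) ≤ N * m := by exact_mod_cast (mem_filter.1 hα).2
    have hsum : ∑ j, d (α j) = 2 * ∑ j, (α j : ℤ) - N * m := by
      simp [d, sum_sub_distrib, mul_sum, mul_comm]
    have hgap : (N * m : ℤ) ≤ 3 * (N * m - 2 * ∑ j, (α j : ℤ)) := by
      have : 0 ≤ ∑ j, (α j : ℤ) := by positivity
      linarith
    rw [hsum]
    push_cast
    have h0 : (0 : ℤ) ≤ N * m := by positivity
    nlinarith [mul_le_mul hgap hgap h0 (h0.trans hgap)]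
  have hvar : ∑ i ∈ range (N + 1), d i ^ 2 ≤ (N + 1) * N ^ 2 := by
    calc ∑ i ∈ range (N + 1), d i ^ 2 ≤ ∑ _i ∈ range (N + 1), (N : ℤ) ^ 2 := by
          refine sum_le_sum fun i hi => ?_
          have : (i : ℤ) ≤ N := by exact_mod_cast Nat.lt_succ_iff.1 (mem_range.1 hi)
          nlinarith
      _ = (N + 1) * N ^ 2 := by simp
  have hbound : (#(lowWeight N m) * m : ℤ) * (N ^ 2 * m) ≤ 9 * (N + 1) ^ m * (N ^ 2 * m) := by
    calc (#(lowWeight N m) * m : ℤ) * (N ^ 2 * m)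
      _ = ∑ _α ∈ lowWeight N m, ((N * m : ℕ) : ℤ) ^ 2 := by
          rw [sum_const, Int.nsmul_eq_mul, Nat.cast_mul]; ring
      _ ≤ ∑ α ∈ lowWeight N m, 9 * (∑ j, d (α j)) ^ 2 := sum_le_sum hdev
      _ ≤ ∑ α ∈ piFinset fun _ => range (N + 1), 9 * (∑ j, d (α j)) ^ 2 :=
          sum_le_sum_of_subset_of_nonneg (filter_subset _ _) fun _ _ _ => by positivity
      _ = 9 * m * (N + 1) ^ (m - 1) * ∑ i ∈ range (N + 1), d i ^ 2 := by
          rw [← mul_sum, sum_piFinset_sq_sum_eq _ hd, card_range]; push_cast; ring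
      _ ≤ 9 * m * (N + 1) ^ (m - 1) * ((N + 1) * N ^ 2) := by gcongr
      _ = 9 * (N + 1) ^ m * (N ^ 2 * m) := by
          rw [← Nat.sub_add_cancel hm, pow_succ]; push_cast; ring
  have hpos : (0 : ℤ) < N ^ 2 * m := by positivity
  exact_mod_cast le_of_mul_le_mul_right hbound hpos

theorem Polynomial.mul_mem_degreeLT {R : Type*} [Semiring R] {c p : R[X]} {d n : ℕ}
    (hc : c.natDegree ≤ d) (hp : p ∈ degreeLT R n) : c * p ∈ degreeLT R (n + d) := by
  rw [mem_degreeLT] at hp ⊢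
  calc (c * p).degree ≤ c.degree + p.degree := degree_mul_le _ _
    _ ≤ d + p.degree := add_le_add_left (degree_le_of_natDegree_le hc) _
    _ < d + n := WithBot.add_lt_add_left WithBot.coe_ne_bot hp
    _ = (n + d : ℕ) := by push_cast; ring

theorem Polynomial.card_le_of_solution_free {F : Type*} [Field F] [Fintype F]
    {c₁ c₂ c₃ : F[X]} (hsum : c₁ + c₂ + c₃ = 0) {n d : ℕ} (hd₁ : c₁.natDegree ≤ d)
    (hd₂ : c₂.natDegree ≤ d) (hd₃ : c₃.natDegree ≤ d) {A : Finset F[X]}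
    (hA : ∀ f ∈ A, f ∈ degreeLT F n)
    (hfree : ∀ x₁ ∈ A, ∀ x₂ ∈ A, ∀ x₃ ∈ A,
      c₁ * x₁ + c₂ * x₂ + c₃ * x₃ = 0 → x₁ = x₂ ∧ x₂ = x₃) :
    #A ≤ 3 * #(lowWeight (Fintype.card F - 1) (n + d)) := by
  have hmem (x y z : A) : c₁ * x + c₂ * y + c₃ * z ∈ degreeLT F (n + d) :=
    add_mem (add_mem (mul_mem_degreeLT hd₁ (hA x x.2)) (mul_mem_degreeLT hd₂ (hA y y.2)))
      (mul_mem_degreeLT hd₃ (hA z z.2))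
  rw [← Fintype.card_coe A]
  refine card_le_three_mul_card_lowWeight_of_add_eq_zero_iff (fun x j => (c₁ * x).coeff j)
    (fun y j => (c₂ * y).coeff j) (fun z j => (c₃ * z).coeff j) fun x y z => ?_
  calc _ ↔ degreeLTEquiv F (n + d) ⟨_, hmem x y z⟩ = 0 := by
        rw [funext_iff, funext_iff]; simp [degreeLTEquiv, coeff_add]
    _ ↔ c₁ * x + c₂ * y + c₃ * z = 0 := degreeLTEquiv_eq_zero_iff_eq_zero _
    _ ↔ x = y ∧ y = z := by
        refine ⟨fun h => ?_, fun ⟨hxy, hyz⟩ => ?_⟩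
        · obtain ⟨hxy, hyz⟩ := hfree x x.2 y y.2 z z.2 h
          exact ⟨Subtype.ext hxy, Subtype.ext hyz⟩
        · rw [hxy, hyz, ← add_mul, ← add_mul, hsum, zero_mul]

theorem bloom_function_field_general (F : Type*) [Field F] [Fintype F]
    (c₁ c₂ c₃ : Polynomial F)
    (hsum : c₁ + c₂ + c₃ = 0) :
    ∃ C : ℝ, 0 < C ∧ ∀ n : ℕ, 2 ≤ n → ∀ A : Finset (Polynomial F),
      (∀ f ∈ A, f.degree < (n : ℕ)) →
      (∀ x₁ ∈ A, ∀ x₂ ∈ A, ∀ x₃ ∈ A,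
        c₁ * x₁ + c₂ * x₂ + c₃ * x₃ = 0 → x₁ = x₂ ∧ x₂ = x₃) →
      (A.card : ℝ) ≤ C * (Fintype.card F : ℝ) ^ n * (Real.log n) ^ 2 / n := by
  set q := Fintype.card F
  set d := c₁.natDegree + c₂.natDegree + c₃.natDegree
  have hq : 1 < q := Fintype.one_lt_card
  have hlog2 : 0 < Real.log 2 := Real.log_pos one_lt_two
  refine ⟨27 * q ^ d / Real.log 2 ^ 2, by positivity, fun n hn A hA hfree => ?_⟩
  have hcard : #A * n ≤ 27 * q ^ d * q ^ n := by
    have hA' := card_le_of_solution_free hsum (n := n) (d := d) (by omega) (by omega) (by omega)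
      (fun f hf => mem_degreeLT.2 (hA f hf)) hfree
    have hΓ := card_lowWeight_mul_le (N := q - 1) (by omega) (n + d)
    rw [Nat.sub_add_cancel hq.le] at hΓ
    calc #A * n ≤ 3 * #(lowWeight (q - 1) (n + d)) * (n + d) := by gcongr; omega
      _ ≤ 3 * (9 * q ^ (n + d)) := by rw [mul_assoc]; gcongr
      _ = 27 * q ^ d * q ^ n := by ring
  have hlog : Real.log 2 ^ 2 ≤ Real.log n ^ 2 := by
    gcongr; exact_mod_cast hn
  have hn0 : (0 : ℝ) < n := by positivity
  rw [le_div_iff₀ hn0]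
  calc (#A : ℝ) * n ≤ 27 * q ^ d * q ^ n := by exact_mod_cast hcard
    _ = 27 * q ^ d / Real.log 2 ^ 2 * q ^ n * Real.log 2 ^ 2 := by field_simp
    _ ≤ 27 * q ^ d / Real.log 2 ^ 2 * q ^ n * Real.log n ^ 2 := by gcongr

/-- **Bloom's bound for translation-invariant equations over `𝔽_q[t]`.** Let `F` be a
finite field with `q` elements and let `c₁, c₂, c₃ ∈ F[t]` be nonzero polynomials with
`c₁ + c₂ + c₃ = 0`. Then there is `C > 0` (depending only on `q` and the `cᵢ`) such
that for all `n ≥ 2`, any set `A` of polynomials of degree `< n` with no non-trivial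
solution to `c₁x₁ + c₂x₂ + c₃x₃ = 0` satisfies `|A| ≤ C · qⁿ · (log n)² / n`. -/
theorem bloom_function_field (F : Type*) [Field F] [Fintype F]
    (c₁ c₂ c₃ : Polynomial F) (h₁ : c₁ ≠ 0) (h₂ : c₂ ≠ 0) (h₃ : c₃ ≠ 0)
    (hsum : c₁ + c₂ + c₃ = 0) :
    ∃ C : ℝ, 0 < C ∧ ∀ n : ℕ, 2 ≤ n → ∀ A : Finset (Polynomial F),
      (∀ f ∈ A, f.degree < (n : ℕ)) →
      (∀ x₁ ∈ A, ∀ x₂ ∈ A, ∀ x₃ ∈ A,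
        c₁ * x₁ + c₂ * x₂ + c₃ * x₃ = 0 → x₁ = x₂ ∧ x₂ = x₃) →
      (A.card : ℝ) ≤ C * (Fintype.card F : ℝ) ^ n * (Real.log n) ^ 2 / n :=
  bloom_function_field_general F c₁ c₂ c₃ hsum
end

section
/- Let G be a finite abelian group with dual Ĝ, let Γ ⊆ Ĝ, and let S ⊆ Ĝ be a finite set whose Γ-dimension equals |S| − k for some integer k ≥ 0. Then for all integers m, t₁, t₂ with m ≥ t₁ ≥ 0 and m ≥ t₂ ≥ 0, the restricted energy satisfies E^♯_{t₁,t₂}(1_S, Γ) ≤ 4^{k+m}. -/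
open scoped BigOperators Pointwise

/-- The restricted additive energy `E^♯_{t₁,t₂}(ω,Γ)`: the sum, over pairs of disjoint
subsets `Δ₁, Δ₂` with `|Δ₁| = t₁`, `|Δ₂| = t₂`, of
`(∏_{γ∈Δ₁∪Δ₂} ω(γ)) · 1_Γ(∑_{γ∈Δ₁} γ − ∑_{γ'∈Δ₂} γ')`; by convention
`E^♯_{0,0}(ω,Γ) = 1`. -/
noncomputable def renergy {H : Type*} [AddCommGroup H] [Fintype H] [DecidableEq H]
    (ω : H → ℝ) (Γ : Set H) (t₁ t₂ : ℕ) : ℝ :=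
  if t₁ = 0 ∧ t₂ = 0 then 1 else
    ∑ Δ₁ : Finset H, ∑ Δ₂ : Finset H,
      if Δ₁.card = t₁ ∧ Δ₂.card = t₂ ∧ Disjoint Δ₁ Δ₂ then
        (∏ γ ∈ Δ₁ ∪ Δ₂, ω γ) * Γ.indicator 1 ((∑ γ ∈ Δ₁, γ) - ∑ γ ∈ Δ₂, γ)
      else 0

/-- `Δ` is `Γ`-dissociated: for every `k ≥ 1` and `λ` there are at most `2^k` pairs
`(Δ₁,Δ₂)` of disjoint subsets of `Δ` with `|Δ₁ ∪ Δ₂| = k` and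
`∑_{γ∈Δ₁} γ − ∑_{γ'∈Δ₂} γ' ∈ Γ + λ`. -/
def Dissociated {H : Type*} [AddCommGroup H] [DecidableEq H]
    (Γ : Set H) (Δ : Finset H) : Prop :=
  ∀ k : ℕ, 1 ≤ k → ∀ lam : H,
    {p : Finset H × Finset H | p.1 ⊆ Δ ∧ p.2 ⊆ Δ ∧ Disjoint p.1 p.2 ∧
      (p.1 ∪ p.2).card = k ∧
      (∑ γ ∈ p.1, γ) - (∑ γ ∈ p.2, γ) ∈ Γ + ({lam} : Set H)}.ncard ≤ 2 ^ k

/-- The `Γ`-dimension of `S`: the size of the largest `Γ`-dissociated subset of `S`. -/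
noncomputable def dimension {H : Type*} [AddCommGroup H] [DecidableEq H]
    (Γ : Set H) (S : Finset H) : ℕ :=
  sSup {r | ∃ Δ ⊆ S, Dissociated Γ Δ ∧ Δ.card = r}

/-!
Choose a `Γ`-dissociated `D ⊆ S` of maximal size, so that `|S \ D| = k`. Since `ω = 1_S`, the
energy counts the pairs `(Δ₁, Δ₂)` of disjoint subsets of `S` of sizes `t₁, t₂` whose signed sum
lies in `Γ`. Sort them by their parts outside `D`: there are at most `2^k · 2^k` choices. Once
those are fixed, the parts inside `D` are disjoint subsets of `D` of fixed total size
`j ≤ t₁ + t₂` whose signed sum lies in a fixed translate of `Γ`, so dissociativity leaves at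
most `2^j ≤ 4^m` of them.
-/

section

variable {H : Type*} [AddCommGroup H] [DecidableEq H]

def dissociationPairs (Γ : Set H) (Δ : Finset H) (j : ℕ) (lam : H) :
    Set (Finset H × Finset H) :=
  {p | p.1 ⊆ Δ ∧ p.2 ⊆ Δ ∧ Disjoint p.1 p.2 ∧ (p.1 ∪ p.2).card = j ∧
    (∑ γ ∈ p.1, γ) - (∑ γ ∈ p.2, γ) ∈ Γ + ({lam} : Set H)}

theorem dissociated_empty (Γ : Set H) : Dissociated Γ ∅ := by
  intro j hj lam
  show (dissociationPairs Γ ∅ j lam).ncard ≤ 2 ^ j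
  suffices dissociationPairs Γ ∅ j lam = ∅ by simp [this]
  refine Set.eq_empty_of_forall_notMem fun _ ⟨h₁, h₂, _, hcard, _⟩ => ?_
  simp_all only [Finset.subset_empty, Finset.union_empty, Finset.card_empty]
  omega

theorem Dissociated.ncard_dissociationPairs_le {Γ : Set H} {Δ : Finset H}
    (hΔ : Dissociated Γ Δ) (j : ℕ) (lam : H) :
    (dissociationPairs Γ Δ j lam).ncard ≤ 2 ^ j := by
  rcases Nat.eq_zero_or_pos j with rfl | hj
  · calc (dissociationPairs Γ Δ 0 lam).ncard ≤ ({(∅, ∅)} : Set (Finset H × Finset H)).ncard := by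
          refine Set.ncard_le_ncard ?_ (Set.finite_singleton _)
          rintro ⟨q₁, q₂⟩ ⟨-, -, -, hcard, -⟩
          simpa using hcard
      _ = 2 ^ 0 := Set.ncard_singleton _
  · exact hΔ j hj lam

theorem exists_dissociated_card_eq_dimension (Γ : Set H) (S : Finset H) :
    ∃ D ⊆ S, Dissociated Γ D ∧ D.card = dimension Γ S :=
  Nat.sSup_mem (s := {r | ∃ D ⊆ S, Dissociated Γ D ∧ D.card = r})
    ⟨0, ∅, S.empty_subset, dissociated_empty Γ, rfl⟩
    ⟨S.card, fun _ ⟨_, hDS, _, hD⟩ => hD ▸ Finset.card_le_card hDS⟩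

open Classical in
noncomputable def energyPairs (Γ : Set H) (S : Finset H) (t₁ t₂ : ℕ) :
    Finset (Finset H × Finset H) :=
  (S.powerset ×ˢ S.powerset).filter fun p => p.1.card = t₁ ∧ p.2.card = t₂ ∧
    Disjoint p.1 p.2 ∧ (∑ γ ∈ p.1, γ) - (∑ γ ∈ p.2, γ) ∈ Γ

theorem mem_energyPairs {Γ : Set H} {S : Finset H} {t₁ t₂ : ℕ} {p : Finset H × Finset H} :
    p ∈ energyPairs Γ S t₁ t₂ ↔ p.1 ⊆ S ∧ p.2 ⊆ S ∧ p.1.card = t₁ ∧ p.2.card = t₂ ∧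
      Disjoint p.1 p.2 ∧ (∑ γ ∈ p.1, γ) - (∑ γ ∈ p.2, γ) ∈ Γ := by
  simp [energyPairs, and_assoc]

theorem renergy_indicator_eq_card_energyPairs [Fintype H] (Γ : Set H) (S : Finset H)
    {t₁ t₂ : ℕ} (ht : ¬(t₁ = 0 ∧ t₂ = 0)) :
    renergy (fun γ => if γ ∈ S then (1 : ℝ) else 0) Γ t₁ t₂ = (energyPairs Γ S t₁ t₂).card := by
  classical
  have hcard : ((energyPairs Γ S t₁ t₂).card : ℝ) =
      ∑ p : Finset H × Finset H, if p ∈ energyPairs Γ S t₁ t₂ then 1 else 0 := by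
    rw [Finset.sum_boole, Finset.filter_mem_eq_inter, Finset.univ_inter]
  rw [renergy, if_neg ht, hcard, ← Finset.univ_product_univ, Finset.sum_product]
  refine Finset.sum_congr rfl fun Δ₁ _ => Finset.sum_congr rfl fun Δ₂ _ => ?_
  simp only [Finset.prod_boole, Set.indicator_apply, mem_energyPairs, Pi.one_apply]
  split_ifs <;> aesop (add simp Finset.subset_iff)

theorem inter_mem_dissociationPairs {Γ : Set H} {S D : Finset H} {t₁ t₂ : ℕ}
    {p : Finset H × Finset H} (hp : p ∈ energyPairs Γ S t₁ t₂) :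
    (p.1 ∩ D, p.2 ∩ D) ∈ dissociationPairs Γ D ((t₁ - (p.1 \ D).card) + (t₂ - (p.2 \ D).card))
      ((∑ γ ∈ p.2 \ D, γ) - ∑ γ ∈ p.1 \ D, γ) := by
  obtain ⟨-, -, hcard₁, hcard₂, hdisj, hΓ⟩ := mem_energyPairs.mp hp
  have hdisj' : Disjoint (p.1 ∩ D) (p.2 ∩ D) :=
    hdisj.mono Finset.inter_subset_left Finset.inter_subset_left
  refine ⟨Finset.inter_subset_right, Finset.inter_subset_right, hdisj', ?_, ?_⟩
  · have h₁ := Finset.card_inter_add_card_sdiff p.1 D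
    have h₂ := Finset.card_inter_add_card_sdiff p.2 D
    rw [Finset.card_union_of_disjoint hdisj']
    omega
  · have h₁ := Finset.sum_inter_add_sum_sdiff p.1 D id
    have h₂ := Finset.sum_inter_add_sum_sdiff p.2 D id
    refine ⟨_, hΓ, _, rfl, ?_⟩
    simp only [id] at h₁ h₂
    rw [← h₁, ← h₂]
    dsimp only
    abel

theorem card_filter_energyPairs_sdiff_eq_le {Γ : Set H} {S D : Finset H}
    (hD : Dissociated Γ D) (t₁ t₂ : ℕ) (b : Finset H × Finset H) :
    ((energyPairs Γ S t₁ t₂).filter fun p => (p.1 \ D, p.2 \ D) = b).card ≤ 2 ^ (t₁ + t₂) := by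
  set j := (t₁ - b.1.card) + (t₂ - b.2.card)
  calc _ ≤ (dissociationPairs Γ D j ((∑ γ ∈ b.2, γ) - ∑ γ ∈ b.1, γ)).ncard := by
        rw [← Set.ncard_coe_finset]
        refine Set.ncard_le_ncard_of_injOn (fun p => (p.1 ∩ D, p.2 ∩ D)) ?_ ?_
          ((D.powerset ×ˢ D.powerset).finite_toSet.subset fun q hq => by
            simpa using ⟨hq.1, hq.2.1⟩)
        · intro p hp
          obtain ⟨hpE, hpb⟩ := Finset.mem_filter.mp (Finset.mem_coe.mp hp)
          subst hpb
          exact inter_mem_dissociationPairs hpE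
        · rintro p hp q hq hpq
          simp only [Finset.coe_filter, Set.mem_ofPred_eq, Prod.ext_iff] at hp hq hpq
          exact Prod.ext
            (by rw [← Finset.sdiff_union_inter p.1 D, ← Finset.sdiff_union_inter q.1 D,
              hp.2.1, hq.2.1, hpq.1])
            (by rw [← Finset.sdiff_union_inter p.2 D, ← Finset.sdiff_union_inter q.2 D,
              hp.2.2, hq.2.2, hpq.2])
    _ ≤ 2 ^ j := hD.ncard_dissociationPairs_le j _
    _ ≤ 2 ^ (t₁ + t₂) := Nat.pow_le_pow_right two_pos (by omega)

theorem card_energyPairs_le {Γ : Set H} {S D : Finset H} (hD : Dissociated Γ D) (t₁ t₂ : ℕ) :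
    (energyPairs Γ S t₁ t₂).card ≤ 4 ^ (S \ D).card * 2 ^ (t₁ + t₂) := by
  have hmaps : ∀ p ∈ energyPairs Γ S t₁ t₂,
      (p.1 \ D, p.2 \ D) ∈ (S \ D).powerset ×ˢ (S \ D).powerset := fun p hp => by
    obtain ⟨h₁, h₂, -⟩ := mem_energyPairs.mp hp
    exact Finset.mem_product.mpr ⟨Finset.mem_powerset.mpr (Finset.sdiff_subset_sdiff h₁ le_rfl),
      Finset.mem_powerset.mpr (Finset.sdiff_subset_sdiff h₂ le_rfl)⟩
  calc _ = ∑ b ∈ (S \ D).powerset ×ˢ (S \ D).powerset,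
        ((energyPairs Γ S t₁ t₂).filter fun p => (p.1 \ D, p.2 \ D) = b).card :=
        Finset.card_eq_sum_card_fiberwise hmaps
    _ ≤ ∑ _b ∈ (S \ D).powerset ×ˢ (S \ D).powerset, 2 ^ (t₁ + t₂) :=
        Finset.sum_le_sum fun b _ => card_filter_energyPairs_sdiff_eq_le hD t₁ t₂ b
    _ = 4 ^ (S \ D).card * 2 ^ (t₁ + t₂) := by
        simp [Finset.card_powerset, ← mul_pow]

end

/-- If `S` has `Γ`-dimension `|S| − k` then `E^♯_{t₁,t₂}(1_S, Γ) ≤ 4^{k+m}` for all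
`m ≥ t₁, t₂ ≥ 0`. -/
theorem renergy_le_of_dimension {H : Type*} [AddCommGroup H] [Fintype H] [DecidableEq H]
    (Γ : Set H) (S : Finset H) (k : ℕ) (hdim : dimension Γ S + k = S.card)
    (m t₁ t₂ : ℕ) (ht₁ : t₁ ≤ m) (ht₂ : t₂ ≤ m) :
    renergy (fun γ => if γ ∈ S then (1 : ℝ) else 0) Γ t₁ t₂ ≤ 4 ^ (k + m) := by
  by_cases ht : t₁ = 0 ∧ t₂ = 0
  · rw [renergy, if_pos ht]
    exact one_le_pow₀ (by norm_num)
  obtain ⟨D, hDS, hD, hDcard⟩ := exists_dissociated_card_eq_dimension Γ S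
  have hk : (S \ D).card = k := by
    rw [Finset.card_sdiff_of_subset hDS]
    omega
  have hpow : 2 ^ (t₁ + t₂) ≤ 4 ^ m :=
    calc 2 ^ (t₁ + t₂) ≤ 2 ^ (2 * m) := Nat.pow_le_pow_right two_pos (by omega)
      _ = 4 ^ m := by rw [pow_mul]; norm_num
  rw [renergy_indicator_eq_card_energyPairs Γ S ht, pow_add]
  exact_mod_cast (card_energyPairs_le hD t₁ t₂).trans (by rw [hk]; gcongr)
end

section
/- Let G be a finite abelian group with dual Ĝ, let Γ ⊆ Ĝ be symmetric (Γ = −Γ), and let ω: Ĝ → ℝ_{≥0} be not identically zero. Let m ≥ 2 and d ≥ n ≥ 2 be integers such that m ≤ d/4 and ‖ω‖₂ ≤ m^{1/2} d^{−1} ‖ω‖₁. Then either there is a finite set Δ ⊆ Ĝ such that ∑_{γ∈Δ} ω(γ) ≥ (n/d)·‖ω‖₁ and Δ is 2d-covered by Γ, or E_{2m}(ω,Γ) ≤ 2^{13m+6n} m^{2m} d^{−2m} ‖ω‖₁^{2m}. -/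
open scoped BigOperators Pointwise

/-- The `ℓ¹` norm of a weight function `ω`. -/
noncomputable def norm1 {H : Type*} [Fintype H] (ω : H → ℝ) : ℝ := ∑ γ, ω γ

/-- The `ℓ²` norm of a weight function `ω`. -/
noncomputable def norm2 {H : Type*} [Fintype H] (ω : H → ℝ) : ℝ :=
  Real.sqrt (∑ γ, ω γ ^ 2)

/-- The additive energy `E_{2m}(ω,Γ)`. -/
noncomputable def energy {H : Type*} [AddCommGroup H] [Fintype H]
    (ω : H → ℝ) (Γ : Set H) (m : ℕ) : ℝ :=
  ∑ γ : Fin m → H, ∑ γ' : Fin m → H,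
    (∏ i, ω (γ i)) * (∏ i, ω (γ' i)) * Γ.indicator 1 ((∑ i, γ i) - ∑ i, γ' i)

/-- `⟨Λ⟩ = {∑_{λ∈Λ} ε_λ λ : ε_λ ∈ {−1,0,1}}`. -/
def spanPM {H : Type*} [AddCommGroup H] (Λ : Finset H) : Set H :=
  {x | ∃ ε : H → ℤ, (∀ lam, ε lam = -1 ∨ ε lam = 0 ∨ ε lam = 1) ∧
    x = ∑ lam ∈ Λ, ε lam • lam}

/-- `S` is `d`-covered by `Γ`: there is `Λ` with `|Λ| ≤ d` and `S ⊆ Γ − Γ + ⟨Λ⟩`. -/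
def Covered {H : Type*} [AddCommGroup H] (Γ : Set H) (d : ℝ) (S : Set H) : Prop :=
  ∃ Λ : Finset H, (Λ.card : ℝ) ≤ d ∧ S ⊆ Γ - Γ + spanPM Λ

/-! Write `Σ X` for the set of subset sums of `X` and `T(P, N) = Γ + Σ P - Σ N`. Peel the `2m`
variables of the energy off one at a time, keeping track of the partial sum. If no set of
`ω`-mass `(n/d)‖ω‖₁` is `2d`-covered by `Γ`, every such set contains `K = ⌊d/m⌋` points whose
pairwise differences avoid `Γ - Γ + ⟨P ∪ N⟩`. The translates of `T(P, N)` by these points are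
then pairwise disjoint and all lie in `T(P, N ∪ L)`, so one of them carries at most a `1/K` share
of the remaining energy. Hence each peeled variable costs a factor `(1/K + n/d)‖ω‖₁ ≤
((2m + n)/d)‖ω‖₁`, and the `2m` steps add at most `2mK ≤ 2d` points to `P ∪ N`. Because `Γ`
is symmetric, negating everything swaps `P` and `N`, so the variables with a minus sign are
peeled in the same way. -/

section SignedSums

variable {H : Type*} [AddCommGroup H]

def subsetSums (X : Finset H) : Set H := {y | ∃ Y ⊆ X, ∑ a ∈ Y, a = y}

lemma subsetSums_empty : subsetSums (∅ : Finset H) = 0 := by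
  ext y
  simp [subsetSums, eq_comm]

lemma mem_spanPM_of_mem {X : Finset H} {x : H} (hx : x ∈ X) : x ∈ spanPM X := by
  classical
  refine ⟨fun a => if a = x then 1 else 0, fun a => ?_, ?_⟩
  · dsimp only
    split_ifs <;> simp
  · simp [ite_smul, hx]

lemma neg_mem_spanPM {X : Finset H} {x : H} (hx : x ∈ spanPM X) : -x ∈ spanPM X := by
  obtain ⟨ε, hε, rfl⟩ := hx
  refine ⟨-ε, fun a => ?_, by simp [neg_smul]⟩
  rcases hε a with h | h | h <;> simp [h]

lemma sub_mem_spanPM_of_mem_subsetSums {X : Finset H} {u u' : H} (hu : u ∈ subsetSums X)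
    (hu' : u' ∈ subsetSums X) : u - u' ∈ spanPM X := by
  classical
  obtain ⟨Y, hY, rfl⟩ := hu
  obtain ⟨Y', hY', rfl⟩ := hu'
  refine ⟨fun a => (if a ∈ Y then 1 else 0) - (if a ∈ Y' then 1 else 0), fun a => ?_, ?_⟩
  · dsimp only
    split_ifs <;> simp
  · simp only [sub_smul, ite_smul, one_smul, zero_smul, Finset.sum_sub_distrib,
      Finset.sum_ite_mem, Finset.inter_eq_right.mpr hY, Finset.inter_eq_right.mpr hY']

lemma mem_sub_add_spanPM_of_mem {Γ : Set H} (hΓ : Γ.Nonempty) {X : Finset H} {x : H} (hx : x ∈ X) :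
    x ∈ Γ - Γ + spanPM X := by
  obtain ⟨g, hg⟩ := hΓ
  exact ⟨0, ⟨g, hg, g, hg, sub_self g⟩, x, mem_spanPM_of_mem hx, zero_add x⟩

lemma neg_mem_sub_add_spanPM {Γ : Set H} {X : Finset H} {x : H}
    (hx : x ∈ Γ - Γ + spanPM X) : -x ∈ Γ - Γ + spanPM X := by
  obtain ⟨_, ⟨g, hg, g', hg', rfl⟩, w, hw, rfl⟩ := hx
  exact ⟨g' - g, Set.sub_mem_sub hg' hg, -w, neg_mem_spanPM hw, by dsimp only; abel⟩

lemma neg_add_sub_subsetSums (Γ : Set H) (P N : Finset H) :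
    -(Γ + subsetSums P - subsetSums N) = -Γ + subsetSums N - subsetSums P := by
  rw [neg_sub, sub_add_eq_sub_sub, neg_add_eq_sub]

variable [DecidableEq H]

lemma add_mem_subsetSums_union {X Y : Finset H} {u a : H} (hu : u ∈ subsetSums X)
    (haX : a ∉ X) (haY : a ∈ Y) : u + a ∈ subsetSums (X ∪ Y) := by
  obtain ⟨Z, hZ, rfl⟩ := hu
  refine ⟨insert a Z, Finset.insert_subset (Finset.mem_union_right X haY)
    (hZ.trans Finset.subset_union_left), ?_⟩
  rw [Finset.sum_insert fun h => haX (hZ h), add_comm]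

lemma add_mem_spanPM_union {X Y : Finset H} (hXY : Disjoint X Y) {x y : H}
    (hx : x ∈ spanPM X) (hy : y ∈ spanPM Y) : x + y ∈ spanPM (X ∪ Y) := by
  obtain ⟨ε, hε, rfl⟩ := hx
  obtain ⟨η, hη, rfl⟩ := hy
  refine ⟨fun a => if a ∈ X then ε a else η a, fun a => ?_, ?_⟩
  · dsimp only
    split_ifs
    exacts [hε a, hη a]
  · rw [Finset.sum_union hXY]
    congr 1 <;> refine Finset.sum_congr rfl fun a ha => ?_
    · simp [ha]
    · simp [Finset.disjoint_right.mp hXY ha]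

lemma sub_mem_sub_add_spanPM {Γ : Set H} {P N : Finset H} (hPN : Disjoint P N) {x y : H}
    (hx : x ∈ Γ + subsetSums P - subsetSums N) (hy : y ∈ Γ + subsetSums P - subsetSums N) :
    x - y ∈ Γ - Γ + spanPM (P ∪ N) := by
  obtain ⟨_, ⟨g, hg, u, hu, rfl⟩, v, hv, rfl⟩ := hx
  obtain ⟨_, ⟨g', hg', u', hu', rfl⟩, v', hv', rfl⟩ := hy
  refine ⟨g - g', Set.sub_mem_sub hg hg', (u - u') + (v' - v),
    add_mem_spanPM_union hPN (sub_mem_spanPM_of_mem_subsetSums hu hu')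
      (sub_mem_spanPM_of_mem_subsetSums hv' hv), by dsimp only; abel⟩

lemma exists_separated_subset {Γ : Set H} (hΓ : Γ.Nonempty) {D : ℕ} {Δ : Finset H}
    (hΔ : ¬Covered Γ D Δ) (F : Finset H) (k : ℕ) (hk : F.card + k ≤ D) :
    ∃ L ⊆ Δ, L.card = k ∧ Disjoint F L ∧
      (L : Set H).Pairwise fun l l' => l - l' ∉ Γ - Γ + spanPM F := by
  induction k with
  | zero => exact ⟨∅, by simp⟩
  | succ k ih =>
    obtain ⟨L, hLΔ, rfl, hFL, hL⟩ := ih (by omega)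
    obtain ⟨x, hxΔ, hx⟩ : ∃ x ∈ Δ, x ∉ Γ - Γ + spanPM (F ∪ L) := by
      by_contra! h
      exact hΔ ⟨F ∪ L, by exact_mod_cast (Finset.card_union_le F L).trans (by omega), h⟩
    have hxF : x ∉ F := fun h => hx (mem_sub_add_spanPM_of_mem hΓ (Finset.mem_union_left L h))
    have hxL : x ∉ L := fun h => hx (mem_sub_add_spanPM_of_mem hΓ (Finset.mem_union_right F h))
    have hxl : ∀ l ∈ L, x - l ∉ Γ - Γ + spanPM F := by
      rintro l hl ⟨z, hz, w, hw, h⟩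
      refine hx ⟨z, hz, w + l, add_mem_spanPM_union hFL hw (mem_spanPM_of_mem hl), ?_⟩
      dsimp only at h ⊢
      rw [← add_assoc, h, sub_add_cancel]
    refine ⟨insert x L, Finset.insert_subset hxΔ hLΔ, Finset.card_insert_of_notMem hxL,
      Finset.disjoint_insert_right.mpr ⟨hxF, hFL⟩, ?_⟩
    rw [Finset.coe_insert, Set.pairwise_insert]
    refine ⟨hL, fun l hl _ => ⟨hxl l hl, fun h => hxl l hl ?_⟩⟩
    simpa using neg_mem_sub_add_spanPM h

end SignedSums

section Weights

variable {α : Type*} [Fintype α] {ω : α → ℝ}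

lemma norm1_nonneg (hω : ∀ x, 0 ≤ ω x) : 0 ≤ norm1 ω :=
  Finset.sum_nonneg fun x _ => hω x

lemma sum_mul_le_of_forall_exists_le {f : α → ℝ} (hω : ∀ x, 0 ≤ ω x) {G t θ : ℝ}
    (hG : 0 ≤ G) (ht : 0 ≤ t) (hf : ∀ x, f x ≤ G)
    (hsift : ∀ Δ : Finset α, θ ≤ ∑ x ∈ Δ, ω x → ∃ x ∈ Δ, f x ≤ t) :
    ∑ x, ω x * f x ≤ t * ∑ x, ω x + θ * G := by
  classical
  set Δ := Finset.univ.filter fun x => t < f x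
  have hΔ : ∑ x ∈ Δ, ω x < θ := by
    by_contra! h
    obtain ⟨x, hx, hfx⟩ := hsift Δ h
    exact (Finset.mem_filter.mp hx).2.not_ge hfx
  rw [← Finset.sum_filter_add_sum_filter_not Finset.univ fun x => t < f x]
  have heavy : ∑ x ∈ Δ, ω x * f x ≤ θ * G :=
    calc ∑ x ∈ Δ, ω x * f x ≤ ∑ x ∈ Δ, ω x * G :=
          Finset.sum_le_sum fun x _ => mul_le_mul_of_nonneg_left (hf x) (hω x)
      _ ≤ θ * G := by rw [← Finset.sum_mul]; exact mul_le_mul_of_nonneg_right hΔ.le hG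
  have light : ∑ x ∈ Finset.univ.filter (fun x => ¬t < f x), ω x * f x ≤ t * ∑ x, ω x :=
    calc _ ≤ ∑ x ∈ Finset.univ.filter (fun x => ¬t < f x), ω x * t :=
          Finset.sum_le_sum fun x hx =>
            mul_le_mul_of_nonneg_left (not_lt.mp (Finset.mem_filter.mp hx).2) (hω x)
      _ ≤ ∑ x, ω x * t := Finset.sum_le_sum_of_subset_of_nonneg (Finset.filter_subset _ _)
          fun x _ _ => mul_nonneg (hω x) ht
      _ = t * ∑ x, ω x := by rw [← Finset.sum_mul, mul_comm]
  linarith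

end Weights

section EnergyAt

variable {H : Type*} [AddCommGroup H] [Fintype H]

noncomputable def energyAt (ω : H → ℝ) (a b : ℕ) (c : H) (T : Set H) : ℝ :=
  ∑ γ : Fin a → H, ∑ γ' : Fin b → H,
    (∏ i, ω (γ i)) * (∏ i, ω (γ' i)) * T.indicator 1 (c + ((∑ i, γ i) - ∑ i, γ' i))

lemma energy_eq_energyAt (ω : H → ℝ) (Γ : Set H) (m : ℕ) : energy ω Γ m = energyAt ω m m 0 Γ := by
  simp only [energy, energyAt, zero_add]

lemma energyAt_zero_zero_le (ω : H → ℝ) (c : H) (T : Set H) : energyAt ω 0 0 c T ≤ 1 := by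
  simp only [energyAt, Finset.univ_unique, Finset.sum_singleton, Finset.univ_eq_empty,
    Finset.prod_empty, Finset.sum_empty, sub_zero, add_zero, one_mul]
  exact Set.indicator_le_self' (fun _ _ => zero_le_one) c

lemma energyAt_swap (ω : H → ℝ) (a b : ℕ) (c : H) (T : Set H) :
    energyAt ω a b c T = energyAt ω b a (-c) (-T) := by
  rw [energyAt, energyAt, Finset.sum_comm]
  refine Fintype.sum_congr _ _ fun γ' => Fintype.sum_congr _ _ fun γ => ?_
  have hneg : -c + ((∑ i, γ' i) - ∑ i, γ i) = -(c + ((∑ i, γ i) - ∑ i, γ' i)) := by abel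
  rw [mul_comm (∏ i, ω (γ' i)), hneg]
  congr 1
  by_cases h : c + ((∑ i, γ i) - ∑ i, γ' i) ∈ T <;> simp [h]

lemma energyAt_succ_left (ω : H → ℝ) (a b : ℕ) (c : H) (T : Set H) :
    energyAt ω (a + 1) b c T = ∑ x, ω x * energyAt ω a b (c + x) T := by
  rw [energyAt, ← (Fin.consEquiv fun _ => H).sum_comp, Fintype.sum_prod_type]
  refine Fintype.sum_congr _ _ fun x => ?_
  simp only [energyAt, Finset.mul_sum]
  refine Fintype.sum_congr _ _ fun γ => Fintype.sum_congr _ _ fun γ' => ?_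
  simp only [Fin.consEquiv_apply, Fin.prod_univ_succ, Fin.sum_univ_succ, Fin.cons_zero,
    Fin.cons_succ, add_sub_assoc, add_assoc]
  ring

lemma sum_energyAt_add_le {ω : H → ℝ} (hω : ∀ x, 0 ≤ ω x) (a b : ℕ) (c : H) {T T' : Set H}
    {L : Finset H} (hsub : ∀ l ∈ L, (l + ·) ⁻¹' T ⊆ T')
    (hdisj : (L : Set H).PairwiseDisjoint fun l => (l + ·) ⁻¹' T) :
    ∑ l ∈ L, energyAt ω a b (c + l) T ≤ energyAt ω a b c T' := by
  simp only [energyAt]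
  rw [Finset.sum_comm]
  refine Finset.sum_le_sum fun γ _ => ?_
  rw [Finset.sum_comm]
  refine Finset.sum_le_sum fun γ' _ => ?_
  rw [← Finset.mul_sum]
  refine mul_le_mul_of_nonneg_left ?_ (mul_nonneg (Finset.prod_nonneg fun i _ => hω _)
    (Finset.prod_nonneg fun i _ => hω _))
  set z := c + ((∑ i, γ i) - ∑ i, γ' i)
  calc ∑ l ∈ L, T.indicator 1 (c + l + ((∑ i, γ i) - ∑ i, γ' i))
      = (⋃ l ∈ L, (l + ·) ⁻¹' T).indicator (1 : H → ℝ) z := by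
        rw [Finset.indicator_biUnion_apply L _ hdisj]
        refine Finset.sum_congr rfl fun l _ => ?_
        rw [add_comm c l, add_assoc]
        rfl
    _ ≤ T'.indicator 1 z :=
        Set.indicator_le_indicator_of_subset (Set.iUnion₂_subset hsub)
          (fun _ => zero_le_one) z

end EnergyAt

section Sifting

variable {H : Type*} [AddCommGroup H] [DecidableEq H] {Γ : Set H}

lemma preimage_add_subset_union {P N L : Finset H} (hNL : Disjoint N L) {l : H} (hl : l ∈ L) :
    (l + ·) ⁻¹' (Γ + subsetSums P - subsetSums N) ⊆ Γ + subsetSums P - subsetSums (N ∪ L) := by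
  rintro z ⟨y, hy, v, hv, h⟩
  refine ⟨y, hy, v + l, add_mem_subsetSums_union hv (Finset.disjoint_right.mp hNL hl) hl, ?_⟩
  dsimp only at h ⊢
  rw [sub_add_eq_sub_sub, h, add_sub_cancel_left]

variable [Fintype H] {ω : H → ℝ} {θ : ℝ} {D K : ℕ}

lemma energyAt_succ_le (hΓ : Γ.Nonempty) (hω : ∀ x, 0 ≤ ω x)
    (hnc : ∀ Δ : Finset H, θ ≤ ∑ x ∈ Δ, ω x → ¬Covered Γ D Δ) (hK : 0 < K)
    {a b t : ℕ} {G : ℝ} (hG : 0 ≤ G)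
    (ih : ∀ c P N, Disjoint P N → P.card + N.card + t * K ≤ D →
      energyAt ω a b c (Γ + subsetSums P - subsetSums N) ≤ G)
    (c : H) {P N : Finset H} (hPN : Disjoint P N) (hD : P.card + N.card + (t + 1) * K ≤ D) :
    energyAt ω (a + 1) b c (Γ + subsetSums P - subsetSums N) ≤ G * (norm1 ω / K + θ) := by
  have hKR : (0 : ℝ) < K := by exact_mod_cast hK
  rw [add_one_mul] at hD
  rw [energyAt_succ_left]
  refine (sum_mul_le_of_forall_exists_le (θ := θ) hω hG (div_nonneg hG hKR.le)
    (fun x => ih (c + x) P N hPN (by omega)) fun Δ hΔ => ?_).trans_eq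
    (by rw [norm1]; field_simp)
  obtain ⟨L, hLΔ, hLcard, hL, hLsep⟩ :=
    exists_separated_subset hΓ (hnc Δ hΔ) (P ∪ N) K
      (by have := Finset.card_union_le P N; omega)
  obtain ⟨hPL, hNL⟩ := Finset.disjoint_union_left.mp hL
  have hsum : ∑ l ∈ L, energyAt ω a b (c + l) (Γ + subsetSums P - subsetSums N) ≤ G := by
    refine (sum_energyAt_add_le hω a b c (fun l => preimage_add_subset_union hNL) ?_).trans
      (ih c P (N ∪ L) (Finset.disjoint_union_right.mpr ⟨hPN, hPL⟩) ?_)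
    · intro l hl l' hl' hne
      refine Set.disjoint_left.mpr fun z hz hz' => hLsep hl hl' hne ?_
      simpa using sub_mem_sub_add_spanPM hPN hz hz'
    · have := Finset.card_union_le N L
      omega
  have hL0 : L.Nonempty := Finset.card_pos.mp (hLcard ▸ hK)
  obtain ⟨x, hxL, hx⟩ := Finset.exists_le_of_sum_le hL0
    (f := fun l => energyAt ω a b (c + l) (Γ + subsetSums P - subsetSums N))
    (g := fun _ => G / K)
    (by rwa [Finset.sum_const, hLcard, nsmul_eq_mul, mul_div_cancel₀ _ hKR.ne'])
  exact ⟨x, hLΔ hxL, hx⟩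

theorem energyAt_le_of_not_covered (hΓs : Γ = -Γ) (hΓ : Γ.Nonempty) (hω : ∀ x, 0 ≤ ω x)
    (hθ : 0 ≤ θ) (hnc : ∀ Δ : Finset H, θ ≤ ∑ x ∈ Δ, ω x → ¬Covered Γ D Δ) (hK : 0 < K)
    (a b : ℕ) (c : H) {P N : Finset H} (hPN : Disjoint P N)
    (hD : P.card + N.card + (a + b) * K ≤ D) :
    energyAt ω a b c (Γ + subsetSums P - subsetSums N) ≤ (norm1 ω / K + θ) ^ (a + b) := by
  have hB : 0 ≤ norm1 ω / K + θ := by have := norm1_nonneg hω; positivity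
  generalize hs : a + b = s at hD
  induction s generalizing a b c P N with
  | zero =>
    obtain ⟨rfl, rfl⟩ : a = 0 ∧ b = 0 := by omega
    simpa using energyAt_zero_zero_le ω c _
  | succ s ih =>
    rw [pow_succ]
    obtain _ | a := a
    · obtain _ | b := b
      · omega
      rw [energyAt_swap, neg_add_sub_subsetSums, ← hΓs]
      exact energyAt_succ_le (t := s) hΓ hω hnc hK (pow_nonneg hB s)
        (fun c P N hPN hD => ih b 0 c hPN (by omega) hD) (-c) hPN.symm (by omega)
    · exact energyAt_succ_le (t := s) hΓ hω hnc hK (pow_nonneg hB s)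
        (fun c P N hPN hD => ih a b c hPN (by omega) hD) c hPN (by omega)

end Sifting

lemma add_pow_le_four_pow_mul_pow (k n : ℕ) : ((k : ℝ) + n) ^ k ≤ 4 ^ n * (k : ℝ) ^ k := by
  rcases k.eq_zero_or_pos with rfl | hk
  · simpa using one_le_pow₀ (by norm_num : (1 : ℝ) ≤ 4)
  have hkR : (0 : ℝ) < k := by exact_mod_cast hk
  have hexp : (k : ℝ) + n ≤ k * Real.exp (n / k) := by
    calc (k : ℝ) + n = k * (n / k + 1) := by field_simp; ring
      _ ≤ k * Real.exp (n / k) := by gcongr; exact Real.add_one_le_exp _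
  calc ((k : ℝ) + n) ^ k ≤ (k * Real.exp (n / k)) ^ k := by gcongr
    _ = Real.exp 1 ^ n * (k : ℝ) ^ k := by
        rw [mul_pow, ← Real.exp_nat_mul, ← Real.exp_nat_mul, mul_div_cancel₀ _ hkR.ne', mul_one,
          mul_comm]
    _ ≤ 4 ^ n * (k : ℝ) ^ k := by
        gcongr
        linarith [Real.exp_one_lt_d9]

lemma inv_natCast_div_le {m d : ℕ} (hm : 0 < m) (hmd : m ≤ d) :
    ((d / m : ℕ) : ℝ)⁻¹ ≤ 2 * m / d := by
  have hK : 0 < d / m := Nat.div_pos hmd hm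
  have hdK : d < m * (d / m + 1) := Nat.lt_mul_div_succ d hm
  rw [inv_eq_one_div, div_le_div_iff₀ (by exact_mod_cast hK) (by exact_mod_cast hm.trans_le hmd),
    one_mul]
  exact_mod_cast (show d ≤ 2 * m * (d / m) by nlinarith)

lemma pow_two_mul_le_of_le_div_mul {m n d : ℕ} {x T : ℝ} (hx : 0 ≤ x) (hT : 0 ≤ T)
    (hxd : x ≤ (2 * m + n) / d * T) :
    x ^ (2 * m) ≤
      2 ^ (13 * m + 6 * n) * (m : ℝ) ^ (2 * m) * ((d : ℝ) ^ (2 * m))⁻¹ * T ^ (2 * m) := by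
  have hpow : ((2 * m : ℕ) + n : ℝ) ^ (2 * m) ≤ 2 ^ (13 * m + 6 * n) * (m : ℝ) ^ (2 * m) :=
    calc ((2 * m : ℕ) + n : ℝ) ^ (2 * m) ≤ 4 ^ n * ((2 * m : ℕ) : ℝ) ^ (2 * m) :=
          add_pow_le_four_pow_mul_pow _ n
      _ = 2 ^ (2 * m + 2 * n) * (m : ℝ) ^ (2 * m) := by
          rw [show (4 : ℝ) = 2 ^ 2 by norm_num, ← pow_mul]
          push_cast
          ring
      _ ≤ 2 ^ (13 * m + 6 * n) * (m : ℝ) ^ (2 * m) := by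
          gcongr (2 : ℝ) ^ ?_ * _
          · norm_num
          · omega
  calc x ^ (2 * m) ≤ ((2 * m + n) / d * T) ^ (2 * m) := by gcongr
    _ = ((2 * m : ℕ) + n : ℝ) ^ (2 * m) * ((d : ℝ) ^ (2 * m))⁻¹ * T ^ (2 * m) := by
        push_cast; rw [mul_pow, div_pow, div_eq_mul_inv]
    _ ≤ _ := by gcongr

theorem covered_or_small_energy_general {H : Type*} [AddCommGroup H] [Fintype H]
    (Γ : Set H) (hΓ : Γ = -Γ) (ω : H → ℝ) (hω0 : ∀ γ, 0 ≤ ω γ)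
    (m d n : ℕ) (hm : 2 ≤ m)
    (hmd : (m : ℝ) ≤ (d : ℝ) / 4) :
    (∃ Δ : Finset H, (n / d : ℝ) * norm1 ω ≤ ∑ γ ∈ Δ, ω γ ∧
        Covered Γ (2 * d) (Δ : Set H)) ∨
      energy ω Γ m ≤ 2 ^ (13 * m + 6 * n) * (m : ℝ) ^ (2 * m) *
        ((d : ℝ) ^ (2 * m))⁻¹ * norm1 ω ^ (2 * m) := by
  classical
  refine or_iff_not_imp_left.mpr fun hcov => ?_
  have hT := norm1_nonneg hω0
  rcases Γ.eq_empty_or_nonempty with rfl | hΓne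
  · simp only [energy, Set.indicator_empty, mul_zero, Finset.sum_const_zero]
    positivity
  have hd : 4 * m ≤ d := by exact_mod_cast (le_div_iff₀' (by norm_num : (0 : ℝ) < 4)).mp hmd
  have hK : 0 < d / m := Nat.div_pos (by omega) (by omega)
  have hE := energyAt_le_of_not_covered (D := 2 * d) (θ := n / d * norm1 ω) hΓ hΓne hω0
    (by positivity)
    (fun Δ hΔ hΔcov => hcov ⟨Δ, hΔ, by exact_mod_cast hΔcov⟩) hK m m 0
    (Finset.disjoint_empty_left ∅)
    (by simp only [Finset.card_empty, zero_add]; nlinarith [Nat.div_mul_le_self d m])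
  rw [subsetSums_empty, add_zero, sub_zero, ← energy_eq_energyAt, ← two_mul] at hE
  refine hE.trans (pow_two_mul_le_of_le_div_mul (by positivity) hT ?_)
  calc norm1 ω / (d / m : ℕ) + n / d * norm1 ω
      = ((d / m : ℕ) : ℝ)⁻¹ * norm1 ω + n / d * norm1 ω := by ring
    _ ≤ 2 * m / d * norm1 ω + n / d * norm1 ω := by
        gcongr
        exact inv_natCast_div_le (by omega) (by omega)
    _ = (2 * m + n) / d * norm1 ω := by ring

/-- **The dichotomy between covering and small energy.** For symmetric `Γ` and a
weight `ω` with `‖ω‖₂ ≤ √m·d⁻¹·‖ω‖₁`, either some `Δ` of `ω`-mass at least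
`(n/d)·‖ω‖₁` is `2d`-covered by `Γ`, or
`E_{2m}(ω,Γ) ≤ 2^{13m+6n}·m^{2m}·d^{−2m}·‖ω‖₁^{2m}`. -/
theorem covered_or_small_energy {H : Type*} [AddCommGroup H] [Fintype H]
    (Γ : Set H) (hΓ : Γ = -Γ) (ω : H → ℝ) (hω0 : ∀ γ, 0 ≤ ω γ) (hωne : ω ≠ 0)
    (m d n : ℕ) (hm : 2 ≤ m) (hn : 2 ≤ n) (hnd : n ≤ d)
    (hmd : (m : ℝ) ≤ (d : ℝ) / 4)
    (hω2 : norm2 ω ≤ Real.sqrt m * (d : ℝ)⁻¹ * norm1 ω) :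
    (∃ Δ : Finset H, (n / d : ℝ) * norm1 ω ≤ ∑ γ ∈ Δ, ω γ ∧
        Covered Γ (2 * d) (Δ : Set H)) ∨
      energy ω Γ m ≤ 2 ^ (13 * m + 6 * n) * (m : ℝ) ^ (2 * m) *
        ((d : ℝ) ^ (2 * m))⁻¹ * norm1 ω ^ (2 * m) :=
  covered_or_small_energy_general Γ hΓ ω hω0 m d n hm hmd
end

section
/- Let G be a finite abelian group with |G| = N, let B ⊆ G be nonempty, let f: G → [0,1] be supported on B, set α = ‖f‖₁/|B| and 𝐟 = f − α·1_B, and let ν > 0 and Γ ⊆ Ĝ. Suppose ∑_{γ∈Γ} |𝐟̂(γ)|² ≥ ν·α·‖f‖₁·N. Then for every symmetric set B' ⊆ G (B' = −B') such that |B̂'(γ)| ≥ |B'|/2 for every γ ∈ Γ, and such that |(B' + B' + B) \ B| ≤ 2^{−4}·ν·α·|B|, one has ‖f ∗ 1_{B'}‖_∞ ≥ (1 + 2^{−3}ν)·α·|B'|. -/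
/-!
Write `g = f ∗ 1_{B'}` and `b = 1_B ∗ 1_{B'}`, so that `𝐟 ∗ 1_{B'} = g - α b`. Convolving with
`1_{B'}` multiplies the Fourier transform by `B̂'`, which has size at least `|B'|/2` on `Γ`; by
Parseval, `‖g - α b‖₂² ≥ ν α ‖f‖₁ |B'|² / 4`. Since `B` is almost invariant under `B' + B'`,
`⟨g, b⟩ ≥ (‖f‖₁ - |(B' + B' + B) \ B|) |B'|²`, while `‖b‖₂² ≤ |B| |B'|²`. Expanding
`‖g‖₂² = ‖g - α b‖₂² + 2α⟨g, b⟩ - α²‖b‖₂²` gives `‖g‖₂² ≥ (1 + ν/8) α ‖f‖₁ |B'|²`, and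
`‖g‖₂² ≤ ‖g‖_∞ ‖g‖₁ = ‖g‖_∞ ‖f‖₁ |B'|` finishes the proof.
-/

open scoped BigOperators Pointwise

/-- The Fourier transform of a real function, `f̂(γ) = ∑_x f(x)γ(x)`. -/
noncomputable def dftR {G : Type*} [AddCommGroup G] [Fintype G]
    (f : G → ℝ) (γ : AddChar G ℂ) : ℂ := ∑ x, (f x : ℂ) * γ x

open Finset

section Indicator

variable {α : Type*} [DecidableEq α]

-- Unlike `Set.indicator`, this is definitionally the `if x ∈ s then 1 else 0` of the statement.
def indR (s : Finset α) (x : α) : ℝ := if x ∈ s then 1 else 0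

lemma indR_of_mem {s : Finset α} {x : α} (h : x ∈ s) : indR s x = 1 := if_pos h

lemma indR_of_notMem {s : Finset α} {x : α} (h : x ∉ s) : indR s x = 0 := if_neg h

lemma indR_nonneg (s : Finset α) (x : α) : 0 ≤ indR s x := by
  unfold indR; split_ifs <;> norm_num

lemma indR_le_one (s : Finset α) (x : α) : indR s x ≤ 1 := by
  unfold indR; split_ifs <;> norm_num

lemma sum_indR [Fintype α] (s : Finset α) : ∑ x, indR s x = s.card := by
  simp [indR]

end Indicator

lemma sum_sq_le_mul_sum {ι : Type*} [Fintype ι] {g : ι → ℝ} {M : ℝ} (hg : ∀ x, 0 ≤ g x)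
    (hgM : ∀ x, g x ≤ M) : ∑ x, g x ^ 2 ≤ M * ∑ x, g x := by
  rw [mul_sum]
  exact sum_le_sum fun x _ => by rw [sq]; exact mul_le_mul_of_nonneg_right (hgM x) (hg x)

lemma sum_div_card_mul_card {ι : Type*} [Fintype ι] {f : ι → ℝ} {B : Finset ι}
    (hfB : ∀ x, f x ≠ 0 → x ∈ B) : (∑ x, f x) / B.card * B.card = ∑ x, f x := by
  rcases B.eq_empty_or_nonempty with rfl | hB
  · simp only [card_empty, Nat.cast_zero, mul_zero]
    exact (sum_eq_zero fun x _ => by_contra fun hx => by simpa using hfB x hx).symm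
  exact div_mul_cancel₀ _ (by exact_mod_cast hB.card_pos.ne')

section

variable {G : Type*} [AddCommGroup G] [Fintype G]

def convR (u v : G → ℝ) (x : G) : ℝ := ∑ y, u y * v (x - y)

lemma sum_convR (u v : G → ℝ) : ∑ x, convR u v x = (∑ x, u x) * ∑ x, v x := by
  simp only [convR]
  rw [sum_comm, sum_mul]
  refine sum_congr rfl fun y _ => ?_
  rw [← mul_sum]
  congr 1
  exact Fintype.sum_equiv (Equiv.subRight y) _ _ fun _ => rfl

lemma convR_one_left (v : G → ℝ) (x : G) : convR 1 v x = ∑ y, v y :=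
  Fintype.sum_equiv (Equiv.subLeft x) _ _ fun _ => one_mul _

lemma convR_sub_mul_left (u w v : G → ℝ) (a : ℝ) (x : G) :
    convR (fun y => u y - a * w y) v x = convR u v x - a * convR w v x := by
  simp only [convR, mul_sum, ← sum_sub_distrib]
  exact sum_congr rfl fun _ _ => by ring

lemma convR_nonneg {u v : G → ℝ} (hu : ∀ y, 0 ≤ u y) (hv : ∀ y, 0 ≤ v y) (x : G) :
    0 ≤ convR u v x :=
  sum_nonneg fun y _ => mul_nonneg (hu y) (hv _)

lemma convR_le_convR_left {u w v : G → ℝ} (huw : ∀ y, u y ≤ w y) (hv : ∀ y, 0 ≤ v y) (x : G) :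
    convR u v x ≤ convR w v x :=
  sum_le_sum fun y _ => mul_le_mul_of_nonneg_right (huw y) (hv _)

lemma sum_convR_mul_convR (u w v : G → ℝ) :
    ∑ x, convR u v x * convR w v x =
      ∑ x, ∑ y, ∑ z, u y * w z * (v (x - y) * v (x - z)) := by
  simp only [convR, sum_mul_sum]
  exact sum_congr rfl fun _ _ => sum_congr rfl fun _ _ => sum_congr rfl fun _ _ => by ring

lemma dftR_convR (u v : G → ℝ) (γ : AddChar G ℂ) :
    dftR (convR u v) γ = dftR u γ * dftR v γ := by
  simp only [dftR, convR]
  rw [sum_mul_sum]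
  simp only [Complex.ofReal_sum, Complex.ofReal_mul, sum_mul]
  rw [sum_comm]
  refine sum_congr rfl fun y _ => Fintype.sum_equiv (Equiv.subRight y) _ _ fun x => ?_
  rw [Equiv.subRight_apply, mul_mul_mul_comm, ← AddChar.map_add_eq_mul, add_sub_cancel]

lemma sum_norm_dftR_sq (u : G → ℝ) :
    ∑ γ : AddChar G ℂ, ‖dftR u γ‖ ^ 2 = Fintype.card G * ∑ x, u x ^ 2 := by
  classical
  have hexpand (γ : AddChar G ℂ) :
      dftR u γ * starRingEnd ℂ (dftR u γ) = ∑ a, ∑ b, (u a * u b : ℂ) * γ (a - b) := by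
    simp only [dftR, map_sum, map_mul, Complex.conj_ofReal, sum_mul_sum]
    refine sum_congr rfl fun a _ => sum_congr rfl fun b _ => ?_
    rw [← AddChar.map_neg_eq_conj, sub_eq_add_neg, AddChar.map_add_eq_mul]
    ring
  have horth (a : G) : ∑ γ : AddChar G ℂ, ∑ b, (u a * u b : ℂ) * γ (a - b) =
      Fintype.card G * (u a : ℂ) ^ 2 := by
    rw [sum_comm]
    simp only [← mul_sum, AddChar.sum_apply_eq_ite, sub_eq_zero, mul_ite, mul_zero,
      sum_ite_eq, mem_univ, if_true]
    ring
  suffices h : ∑ γ : AddChar G ℂ, dftR u γ * starRingEnd ℂ (dftR u γ) =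
      Fintype.card G * ∑ x, (u x : ℂ) ^ 2 by
    simp only [Complex.mul_conj'] at h
    exact_mod_cast h
  simp only [hexpand]
  rw [sum_comm, mul_sum]
  exact sum_congr rfl fun a _ => horth a

lemma sq_mul_le_sum_convR_sq (F v : G → ℝ) (Γ : Finset (AddChar G ℂ)) {c δ : ℝ}
    (hc : 0 ≤ c) (hv : ∀ γ ∈ Γ, c ≤ ‖dftR v γ‖)
    (hF : δ * Fintype.card G ≤ ∑ γ ∈ Γ, ‖dftR F γ‖ ^ 2) :
    c ^ 2 * δ ≤ ∑ x, convR F v x ^ 2 := by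
  have hN : (0 : ℝ) < Fintype.card G := by exact_mod_cast Fintype.card_pos
  refine le_of_mul_le_mul_right ?_ hN
  calc c ^ 2 * δ * Fintype.card G
      ≤ c ^ 2 * ∑ γ ∈ Γ, ‖dftR F γ‖ ^ 2 := by rw [mul_assoc]; gcongr
    _ = ∑ γ ∈ Γ, ‖dftR F γ‖ ^ 2 * c ^ 2 := by rw [mul_sum]; simp only [mul_comm]
    _ ≤ ∑ γ ∈ Γ, ‖dftR F γ‖ ^ 2 * ‖dftR v γ‖ ^ 2 := by
        gcongr with γ hγ
        exact hv γ hγ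
    _ ≤ ∑ γ, ‖dftR (convR F v) γ‖ ^ 2 := by
        simp only [dftR_convR, norm_mul, mul_pow]
        exact sum_le_univ_sum_of_nonneg fun γ => by positivity
    _ = (∑ x, convR F v x ^ 2) * Fintype.card G := by rw [sum_norm_dftR_sq, mul_comm]

variable [DecidableEq G]

lemma dftR_indR (s : Finset G) (γ : AddChar G ℂ) : dftR (indR s) γ = ∑ x ∈ s, γ x := by
  simp [dftR, indR, apply_ite Complex.ofReal, ite_mul, sum_ite_mem]

lemma convR_one_indR (s : Finset G) (x : G) : convR 1 (indR s) x = s.card := by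
  rw [convR_one_left, sum_indR]

lemma sum_convR_indR_sq_le (B S : Finset G) :
    ∑ x, convR (indR B) (indR S) x ^ 2 ≤ B.card * S.card ^ 2 := by
  have hle (x : G) : convR (indR B) (indR S) x ≤ S.card := by
    rw [← convR_one_indR S x]
    exact convR_le_convR_left (indR_le_one B) (indR_nonneg S) x
  calc ∑ x, convR (indR B) (indR S) x ^ 2
      ≤ S.card * ∑ x, convR (indR B) (indR S) x :=
        sum_sq_le_mul_sum (convR_nonneg (indR_nonneg B) (indR_nonneg S)) hle
    _ = B.card * S.card ^ 2 := by rw [sum_convR, sum_indR, sum_indR]; ring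

lemma sub_card_mul_sq_le_sum_convR_mul_convR {f : G → ℝ} {B S : Finset G}
    (hf1 : ∀ x, f x ≤ 1) (hfB : ∀ x, f x ≠ 0 → x ∈ B) (hS : ∀ x ∈ S, -x ∈ S) :
    ((∑ x, f x) - ((S + S + B) \ B).card) * S.card ^ 2 ≤
      ∑ x, convR f (indR S) x * convR (indR B) (indR S) x := by
  set D := (S + S + B) \ B
  have hL : (∑ x, f x) * S.card ^ 2 = ∑ x, convR f (indR S) x * convR 1 (indR S) x := by
    simp only [convR_one_indR, ← sum_mul, sum_convR, sum_indR]; ring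
  have hD : (D.card : ℝ) * S.card ^ 2 = ∑ x, convR 1 (indR S) x * convR (indR D) (indR S) x := by
    simp only [convR_one_indR, ← mul_sum, sum_convR, sum_indR]; ring
  -- All three sides are sums over `(x, y, z)` weighted by `1_S (x - y) * 1_S (x - z)`.
  rw [sub_mul, hL, hD, sub_le_iff_le_add, sum_convR_mul_convR, sum_convR_mul_convR,
    sum_convR_mul_convR]
  simp only [← sum_add_distrib]
  gcongr with x _ y _ z _
  simp only [Pi.one_apply, one_mul]
  by_cases hxy : x - y ∈ S
  swap
  · simp [indR_of_notMem hxy]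
  by_cases hxz : x - z ∈ S
  swap
  · simp [indR_of_notMem hxz]
  rw [indR_of_mem hxy, indR_of_mem hxz]
  simp only [mul_one]
  by_cases hzB : z ∈ B
  · rw [indR_of_mem hzB, mul_one]
    exact le_add_of_nonneg_right (indR_nonneg D z)
  rw [indR_of_notMem hzB, mul_zero, zero_add]
  by_cases hfy : f y = 0
  · rw [hfy]
    exact indR_nonneg D z
  have hzD : z ∈ D := by
    refine mem_sdiff.2 ⟨?_, hzB⟩
    rw [show z = x - y + -(x - z) + y by abel]
    exact add_mem_add (add_mem_add hxy (hS _ hxz)) (hfB y hfy)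
  rw [indR_of_mem hzD]
  exact hf1 y

lemma l2_energy_increment {f : G → ℝ} {B S : Finset G} {α ν : ℝ} {Γ : Finset (AddChar G ℂ)}
    (hf1 : ∀ x, f x ≤ 1) (hfB : ∀ x, f x ≠ 0 → x ∈ B)
    (hαB : α * B.card = ∑ x, f x) (hα0 : 0 ≤ α)
    (hΓ : ν * α * (∑ x, f x) * Fintype.card G ≤
      ∑ γ ∈ Γ, ‖dftR (fun x => f x - α * indR B x) γ‖ ^ 2)
    (hS : ∀ x ∈ S, -x ∈ S) (hSΓ : ∀ γ ∈ Γ, (S.card : ℝ) / 2 ≤ ‖∑ x ∈ S, γ x‖)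
    (hadd : (((S + S + B) \ B).card : ℝ) ≤ 2 ^ (-4 : ℤ) * ν * α * B.card) :
    (1 + 2 ^ (-3 : ℤ) * ν) * α * (∑ x, f x) * S.card ^ 2 ≤ ∑ x, convR f (indR S) x ^ 2 := by
  set g := convR f (indR S)
  set b := convR (indR B) (indR S)
  have hspec : ((S.card : ℝ) / 2) ^ 2 * (ν * α * ∑ x, f x) ≤ ∑ x, (g x - α * b x) ^ 2 := by
    simp only [g, b, ← convR_sub_mul_left]
    exact sq_mul_le_sum_convR_sq _ _ Γ (by positivity) (fun γ hγ => dftR_indR S γ ▸ hSΓ γ hγ) hΓ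
  have hgb : ((∑ x, f x) - ((S + S + B) \ B).card) * S.card ^ 2 ≤ ∑ x, g x * b x :=
    sub_card_mul_sq_le_sum_convR_mul_convR hf1 hfB hS
  have hbb : ∑ x, b x ^ 2 ≤ B.card * S.card ^ 2 := sum_convR_indR_sq_le B S
  have hexpand : ∑ x, g x ^ 2 =
      ∑ x, (g x - α * b x) ^ 2 + 2 * α * ∑ x, g x * b x - α ^ 2 * ∑ x, b x ^ 2 := by
    simp only [mul_sum, ← sum_add_distrib, ← sum_sub_distrib]
    exact sum_congr rfl fun x _ => by ring
  have hgbα := mul_le_mul_of_nonneg_left hgb hα0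
  have hbbα := mul_le_mul_of_nonneg_left hbb (sq_nonneg α)
  have haddα := mul_le_mul_of_nonneg_left hadd (by positivity : 0 ≤ α * (S.card : ℝ) ^ 2)
  rw [← hαB] at hspec hgbα ⊢
  norm_num at haddα ⊢
  linear_combination -hexpand + hspec + 2 * hgbα + hbbα + 2 * haddα

end

theorem l2_density_increment_general {G : Type*} [AddCommGroup G] [Fintype G] [DecidableEq G]
    (B : Finset G)
    (f : G → ℝ) (hf0 : ∀ x, 0 ≤ f x) (hf1 : ∀ x, f x ≤ 1)
    (hfB : ∀ x, f x ≠ 0 → x ∈ B)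
    (α : ℝ) (hα : α = (∑ x, |f x|) / B.card)
    (ν : ℝ) (Γ : Finset (AddChar G ℂ))
    (hΓ : ν * α * (∑ x, |f x|) * Fintype.card G ≤
      ∑ γ ∈ Γ, ‖dftR (fun x => f x - α * if x ∈ B then 1 else 0) γ‖ ^ 2)
    (B' : Finset G) (hB'symm : ∀ x ∈ B', -x ∈ B')
    (hB'Γ : ∀ γ ∈ Γ, (B'.card : ℝ) / 2 ≤ ‖∑ x ∈ B', γ x‖)
    (hadd : (((B' + B' + B) \ B).card : ℝ) ≤ 2 ^ (-4 : ℤ) * ν * α * B.card) :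
    (1 + 2 ^ (-3 : ℤ) * ν) * α * B'.card ≤
      ⨆ x : G, |∑ y, f y * if x - y ∈ B' then 1 else 0| := by
  have hL : ∑ x, |f x| = ∑ x, f x := sum_congr rfl fun x _ => abs_of_nonneg (hf0 x)
  rw [hL] at hα hΓ
  set g := convR f (indR B')
  change _ ≤ ⨆ x, |g x|
  have hα0 : 0 ≤ α := hα ▸ div_nonneg (sum_nonneg fun x _ => hf0 x) (Nat.cast_nonneg _)
  have hg0 : ∀ x, 0 ≤ g x := convR_nonneg hf0 (indR_nonneg B')
  have hgM (x : G) : g x ≤ ⨆ x, |g x| :=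
    (le_abs_self _).trans (le_ciSup (Set.finite_range fun x => |g x|).bddAbove x)
  have hmass := l2_energy_increment hf1 hfB (hα ▸ sum_div_card_mul_card hfB) hα0 hΓ
    hB'symm hB'Γ hadd
  have hmax : ∑ x, g x ^ 2 ≤ (⨆ x, |g x|) * ((∑ x, f x) * B'.card) := by
    rw [← sum_indR B', ← sum_convR]
    exact sum_sq_le_mul_sum hg0 hgM
  rcases (mul_nonneg (sum_nonneg fun x _ => hf0 x) (Nat.cast_nonneg B'.card)).eq_or_lt
    with hLK | hLK
  · have hαK : α * B'.card = 0 := by rw [hα, div_mul_eq_mul_div, ← hLK, zero_div]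
    rw [mul_assoc, hαK, mul_zero]
    exact (hg0 0).trans (hgM 0)
  · exact le_of_mul_le_mul_right (by linarith) hLK

/-- **From `L²` mass of the balanced function on a spectrum to a density increment.** -/
theorem l2_density_increment {G : Type*} [AddCommGroup G] [Fintype G] [DecidableEq G]
    (B : Finset G) (hB : B.Nonempty)
    (f : G → ℝ) (hf0 : ∀ x, 0 ≤ f x) (hf1 : ∀ x, f x ≤ 1)
    (hfB : ∀ x, f x ≠ 0 → x ∈ B)
    (α : ℝ) (hα : α = (∑ x, |f x|) / B.card)
    (ν : ℝ) (hν : 0 < ν) (Γ : Finset (AddChar G ℂ))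
    (hΓ : ν * α * (∑ x, |f x|) * Fintype.card G ≤
      ∑ γ ∈ Γ, ‖dftR (fun x => f x - α * if x ∈ B then 1 else 0) γ‖ ^ 2)
    (B' : Finset G) (hB'symm : ∀ x ∈ B', -x ∈ B')
    (hB'Γ : ∀ γ ∈ Γ, (B'.card : ℝ) / 2 ≤ ‖∑ x ∈ B', γ x‖)
    (hadd : (((B' + B' + B) \ B).card : ℝ) ≤ 2 ^ (-4 : ℤ) * ν * α * B.card) :
    (1 + 2 ^ (-3 : ℤ) * ν) * α * B'.card ≤
      ⨆ x : G, |∑ y, f y * if x - y ∈ B' then 1 else 0| :=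
  l2_density_increment_general B f hf0 hf1 hfB α hα ν Γ hΓ B' hB'symm hB'Γ hadd
end
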